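/- Let α and β be countable persistence diagrams that are 1-finite with respect to d_rk (i.e. W₁^rk(α,0) < ∞ and W₁^rk(β,0) < ∞, where 0 is the empty diagram). Then ‖Λα − Λβ‖₁ ≤ ½ W₁^rk(α, β). -/

import Mathlib

/-!
For one pair of points, `|tent x - tent y| = tent x + tent y - 2 tent (x ∩ y)` and the tent of an
interval of length `ℓ` has integral `ℓ² / 4`, so `2 ∫ |tent x - tent y| = d_rk(x, y)` exactly.
Summing over a coupling, it remains to compare the landscapes with the coupled tents at each `t`.
Write `|a - b|` as the measure of the levels `h > 0` lying between `a` and `b`. At a level `h`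
the landscapes differ in `|#{x ∈ α : tent x t > h} - #{y ∈ β : tent y t > h}|` layers, which is
at most the number of coupled pairs that `h` separates; 1-finiteness makes these counts finite.
-/

open scoped Classical ENNReal
open MeasureTheory Filter

noncomputable section

/-- Off-diagonal points of `ℝ²_≤`. -/
abbrev Pt : Type := {p : ℝ × ℝ // p.1 < p.2}

/-- The quotient `(ℝ²_≤ ∖ Δ) ∪ {Δ}`: the diagonal is collapsed to the single
point `none`. -/
abbrev PtD : Type := Option Pt

/-- The rank "distance" formula on `ℝ²_≤`. -/
def drk (x y : ℝ × ℝ) : ℝ :=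
  (x.2 - x.1) ^ 2 / 2 + (y.2 - y.1) ^ 2 / 2 - (max (min x.2 y.2 - max x.1 y.1) 0) ^ 2

/-- The dimension "distance" formula on `ℝ²_≤` (length of the symmetric
difference of the intervals `[x₁,x₂]` and `[y₁,y₂]`). -/
def ddim (x y : ℝ × ℝ) : ℝ :=
  (x.2 - x.1) + (y.2 - y.1) - 2 * max (min x.2 y.2 - max x.1 y.1) 0

/-- `d_rk` on the quotient `(ℝ²_≤ ∖ Δ) ∪ {Δ}`, with `d_rk(x,Δ) = ½(x₂−x₁)²`. -/
def drkQ : PtD → PtD → ℝ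
  | Option.some x, Option.some y => drk x.1 y.1
  | Option.some x, Option.none => (x.1.2 - x.1.1) ^ 2 / 2
  | Option.none, Option.some y => (y.1.2 - y.1.1) ^ 2 / 2
  | Option.none, Option.none => 0

/-- `d_dim` on the quotient `(ℝ²_≤ ∖ Δ) ∪ {Δ}`, with `d_dim(x,Δ) = x₂−x₁`. -/
def ddimQ : PtD → PtD → ℝ
  | Option.some x, Option.some y => ddim x.1 y.1
  | Option.some x, Option.none => x.1.2 - x.1.1
  | Option.none, Option.some y => y.1.2 - y.1.1
  | Option.none, Option.none => 0

/-- A countable persistence diagram: a countable family of points, where `none`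
entries represent no point (equivalently, copies of the diagonal `Δ`, which is
the base point of the quotient). The empty diagram is `fun _ => none`. -/
abbrev Diagram : Type := ℕ → PtD

/-- Pad a countable diagram with countably many copies of the diagonal, so that
partial matchings between two diagrams become bijections of the padded index
sets. -/
def pad (α : Diagram) : ℕ ⊕ ℕ → PtD
  | Sum.inl i => α i
  | Sum.inr _ => none

/-- The 1-Wasserstein distance between countable persistence diagrams with
ground metric `d`: the infimum over all couplings (= bijections of the padded
diagrams; unmatched points are matched with the diagonal) of the possibly
infinite total cost. -/
def W1c (d : PtD → PtD → ℝ) (α β : Diagram) : ℝ≥0∞ :=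
  ⨅ e : (ℕ ⊕ ℕ) ≃ (ℕ ⊕ ℕ), ∑' i : ℕ ⊕ ℕ, ENNReal.ofReal (d (pad α i) (pad β (e i)))

/-- The tent function of a (possibly diagonal) point. -/
def tentD : PtD → ℝ → ℝ
  | Option.some x, t => max 0 (min (t - x.1.1) (x.1.2 - t))
  | Option.none, _ => 0

/-- The persistence landscape `λ_α(k,t)` of a countable diagram: the `k`-th
largest element of the multiset `{tent_x(t) : x ∈ α}` (and `0` if `α` has fewer
than `k` points). -/
def landC (α : Diagram) (k : ℕ) (t : ℝ) : ℝ :=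
  sSup {h : ℝ | 0 < h ∧ ∃ s : Finset ℕ, k ≤ s.card ∧ ∀ i ∈ s, h ≤ tentD (α i) t}

/-- `‖Λα‖₁ = ∑_{k ≥ 1} ∫ λ_α(k,t) dt`, valued in `[0,∞]`. -/
def lambdaNormC (α : Diagram) : ℝ≥0∞ :=
  ∑' k : ℕ, ∫⁻ t : ℝ, ENNReal.ofReal (landC α (k + 1) t)

/-- `‖Λα − Λβ‖₁ = ∑_{k ≥ 1} ∫ |λ_α(k,t) − λ_β(k,t)| dt`, valued in `[0,∞]`. -/
def lambdaDistC (α β : Diagram) : ℝ≥0∞ :=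
  ∑' k : ℕ, ∫⁻ t : ℝ, ENNReal.ofReal |landC α (k + 1) t - landC β (k + 1) t|

/-- The empty diagram. -/
def emptyDiagram : Diagram := fun _ => none

open Set
open scoped symmDiff

def tent (a b t : ℝ) : ℝ := max 0 (min (t - a) (b - t))

lemma tent_nonneg (a b t : ℝ) : 0 ≤ tent a b t := le_max_left _ _

lemma continuous_tent (a b : ℝ) : Continuous (tent a b) := by
  unfold tent; fun_prop

lemma tent_eq_zero_of_notMem_Icc {a b t : ℝ} (ht : t ∉ Icc a b) : tent a b t = 0 := by
  rw [mem_Icc, not_and_or, not_le, not_le] at ht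
  refine max_eq_left ?_
  rcases ht with ht | ht
  · exact (min_le_left _ _).trans (by linarith)
  · exact (min_le_right _ _).trans (by linarith)

lemma integrable_tent (a b : ℝ) : Integrable (tent a b) :=
  (continuous_tent a b).integrable_of_hasCompactSupport
    (HasCompactSupport.intro isCompact_Icc fun _ => tent_eq_zero_of_notMem_Icc)

lemma tent_le {a b : ℝ} (hab : a ≤ b) (t : ℝ) : tent a b t ≤ (b - a) / 2 :=
  max_le (by linarith) (by rcases min_cases (t - a) (b - t) with h | h <;> linarith)

lemma min_tent_tent (a b a' b' t : ℝ) :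
    min (tent a b t) (tent a' b' t) = tent (max a a') (min b b') t := by
  rw [tent, tent, tent, ← max_min_distrib_left, min_min_min_comm, min_sub_sub_left,
    min_sub_sub_right]

lemma integral_tent (a b : ℝ) : ∫ t, tent a b t = max (b - a) 0 ^ 2 / 4 := by
  rcases le_or_gt b a with hba | hab
  · have hzero : tent a b = 0 := funext fun t =>
      max_eq_left (by rcases min_cases (t - a) (b - t) with h | h <;> linarith)
    simp [hzero, max_eq_right (sub_nonpos.mpr hba)]
  have hsupp : ∀ t ∉ Icc a b, tent a b t = 0 := fun _ => tent_eq_zero_of_notMem_Icc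
  have hleft : ∫ t in a..(a + b) / 2, tent a b t = ∫ t in a..(a + b) / 2, (t - a) :=
    intervalIntegral.integral_congr fun t ht => by
      rw [uIcc_of_le (by linarith), mem_Icc] at ht
      simp only [tent]
      rw [min_eq_left (by linarith), max_eq_right (by linarith)]
  have hright : ∫ t in (a + b) / 2..b, tent a b t = ∫ t in (a + b) / 2..b, (b - t) :=
    intervalIntegral.integral_congr fun t ht => by
      rw [uIcc_of_le (by linarith), mem_Icc] at ht
      simp only [tent]
      rw [min_eq_right (by linarith), max_eq_right (by linarith)]
  rw [← setIntegral_eq_integral_of_forall_compl_eq_zero hsupp, integral_Icc_eq_integral_Ioc,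
    ← intervalIntegral.integral_of_le hab.le,
    ← intervalIntegral.integral_add_adjacent_intervals
      ((continuous_tent a b).intervalIntegrable a ((a + b) / 2))
      ((continuous_tent a b).intervalIntegrable ((a + b) / 2) b),
    hleft, hright, intervalIntegral.integral_comp_sub_right (fun t => t),
    intervalIntegral.integral_comp_sub_left (fun t => t), integral_id, integral_id,
    max_eq_left (by linarith)]
  ring

lemma two_mul_integral_abs_sub_tent {a b a' b' : ℝ} (hab : a ≤ b) (hab' : a' ≤ b') :
    2 * ∫ t, |tent a b t - tent a' b' t| = drk (a, b) (a', b') := by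
  have habs : ∀ t, |tent a b t - tent a' b' t|
      = tent a b t + tent a' b' t - 2 * tent (max a a') (min b b') t := fun t => by
    rw [← min_tent_tent, ← max_sub_min_eq_abs', ← min_add_max (tent a b t)]
    ring
  simp only [habs]
  have hsum : Integrable fun t => tent a b t + tent a' b' t :=
    (integrable_tent a b).add (integrable_tent a' b')
  rw [integral_sub hsum ((integrable_tent _ _).const_mul 2),
    integral_add (integrable_tent a b) (integrable_tent a' b'),
    integral_const_mul, integral_tent, integral_tent, integral_tent,
    max_eq_left (sub_nonneg.mpr hab), max_eq_left (sub_nonneg.mpr hab')]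
  simp only [drk]
  ring

lemma tentD_some (p : Pt) : tentD (some p) = tent p.1.1 p.1.2 := rfl

lemma tentD_none (c : ℝ) : tentD none = tent c c := by
  funext t
  have : min (t - c) (c - t) ≤ 0 := min_le_iff.mpr (by
    rcases le_total t c with h | h
    · exact .inl (by linarith)
    · exact .inr (by linarith))
  exact (max_eq_left this).symm

lemma tentD_nonneg (x : PtD) (t : ℝ) : 0 ≤ tentD x t := by
  cases x
  · exact le_rfl
  · exact tent_nonneg _ _ _

lemma continuous_tentD (x : PtD) : Continuous (tentD x) := by
  cases x
  · exact continuous_const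
  · exact continuous_tent _ _

lemma integrable_tentD (x : PtD) : Integrable (tentD x) := by
  cases x
  · exact tentD_none 0 ▸ integrable_tent 0 0
  · exact integrable_tent _ _

lemma two_mul_integral_abs_sub_tentD (x y : PtD) :
    2 * ∫ t, |tentD x t - tentD y t| = drkQ x y := by
  -- `Δ` is the degenerate tent at the partner's birth time, where `drk` agrees with `drkQ · none`
  match x, y with
  | none, none => simp [tentD, drkQ]
  | some p, none =>
    rw [tentD_some, tentD_none p.1.1, two_mul_integral_abs_sub_tent p.2.le le_rfl]
    simp [drk, drkQ]
  | none, some q =>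
    rw [tentD_some, tentD_none q.1.1, two_mul_integral_abs_sub_tent le_rfl q.2.le]
    simp [drk, drkQ]
  | some p, some q =>
    exact two_mul_integral_abs_sub_tent p.2.le q.2.le

lemma lintegral_abs_sub_tentD_mul_two (x y : PtD) :
    (∫⁻ t, ENNReal.ofReal |tentD x t - tentD y t|) * 2 = ENNReal.ofReal (drkQ x y) := by
  have hint : Integrable fun t => |tentD x t - tentD y t| :=
    ((integrable_tentD x).sub (integrable_tentD y)).abs
  rw [← ofReal_integral_eq_lintegral_ofReal hint (.of_forall fun _ => abs_nonneg _),
    ← two_mul_integral_abs_sub_tentD, mul_comm, ENNReal.ofReal_mul zero_le_two,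
    ENNReal.ofReal_ofNat]

lemma two_mul_sq_tentD_le_drkQ_none (x : PtD) (t : ℝ) : 2 * tentD x t ^ 2 ≤ drkQ x none := by
  cases x with
  | none => simp [tentD, drkQ]
  | some p =>
    have := tent_le p.2.le t
    have := tent_nonneg p.1.1 p.1.2 t
    simp only [drkQ, tentD_some]
    nlinarith

lemma Iio_symmDiff_Iio {a b : ℝ} : Iio a ∆ Iio b = Ico (min a b) (max a b) := by
  ext h
  simp only [mem_symmDiff, mem_Iio, mem_Ico, min_le_iff, lt_max_iff, not_lt]
  constructor
  · rintro (⟨ha, hb⟩ | ⟨hb, ha⟩)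
    · exact ⟨.inr hb, .inl ha⟩
    · exact ⟨.inl ha, .inr hb⟩
  · rintro ⟨ha | hb, hlt | hlt⟩
    · exact absurd hlt (not_lt.mpr ha)
    · exact .inr ⟨hlt, ha⟩
    · exact .inl ⟨hlt, hb⟩
    · exact absurd hlt (not_lt.mpr hb)

lemma ofReal_abs_sub_eq_setLIntegral_indicator {a b : ℝ} (ha : 0 ≤ a) (hb : 0 ≤ b) :
    ENNReal.ofReal |a - b| = ∫⁻ h in Ioi 0, (Iio a ∆ Iio b).indicator 1 h := by
  have hsub : Ico (min a b) (max a b) ⊆ Ici 0 := fun h hh => (le_min ha hb).trans hh.1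
  rw [lintegral_indicator_one (measurableSet_Iio.symmDiff measurableSet_Iio),
    Measure.restrict_congr_set Ioi_ae_eq_Ici, Measure.restrict_apply' measurableSet_Ici,
    Iio_symmDiff_Iio, inter_eq_left.mpr hsub, Real.volume_Ico,
    max_sub_min_eq_abs']

lemma tsum_indicator_one_eq_encard {ι : Type*} (s : Set ι) :
    ∑' i, s.indicator (1 : ι → ℝ≥0∞) i = s.encard := by
  simpa only [← tsum_subtype, Pi.one_apply] using ENNReal.tsum_set_one s

lemma encard_symmDiff_Iio_ncard_le {ι : Type*} {A B : Set ι} (hA : A.Finite) (hB : B.Finite) :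
    (Iio A.ncard ∆ Iio B.ncard).encard ≤ (A ∆ B).encard := by
  rw [← (finite_Iio _).symmDiff (finite_Iio _) |>.cast_ncard_eq, ← (hA.symmDiff hB).cast_ncard_eq,
    Nat.cast_le, Set.symmDiff_def, Set.symmDiff_def, ncard_union_eq disjoint_sdiff_sdiff,
    ncard_union_eq disjoint_sdiff_sdiff hA.sdiff hB.sdiff, Iio_sdiff_Iio, Iio_sdiff_Iio,
    ncard_Ico_nat, ncard_Ico_nat]
  exact add_le_add (le_ncard_sdiff B A hB) (le_ncard_sdiff A B hA)

/-- `L k` is the `(k+1)`-st largest value of `u`, read off the sizes of the superlevel sets. -/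
def IsDecreasingRearrangement {ι : Type*} (L : ℕ → ℝ) (u : ι → ℝ) : Prop :=
  ∀ h > 0, {i | h < u i}.Finite ∧ ∀ k, h < L k ↔ k < {i | h < u i}.ncard

namespace IsDecreasingRearrangement

variable {ι κ : Type*} {L M : ℕ → ℝ} {u v : ι → ℝ}

lemma tsum_indicator_symmDiff_Iio_le (hL : IsDecreasingRearrangement L u)
    (hM : IsDecreasingRearrangement M v) {h : ℝ} (hh : 0 < h) :
    ∑' k, (Iio (L k) ∆ Iio (M k)).indicator 1 h ≤
      ∑' i, (Iio (u i) ∆ Iio (v i)).indicator (1 : ℝ → ℝ≥0∞) h := by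
  obtain ⟨hA, hLA⟩ := hL h hh
  obtain ⟨hB, hMB⟩ := hM h hh
  calc ∑' k, (Iio (L k) ∆ Iio (M k)).indicator 1 h
      = ∑' k, (Iio {i | h < u i}.ncard ∆ Iio {i | h < v i}.ncard).indicator 1 k := by
        congr! 1 with k
        simp only [indicator_apply, mem_symmDiff, mem_Iio, hLA, hMB, Pi.one_apply]
    _ ≤ ∑' i, ({i | h < u i} ∆ {i | h < v i}).indicator 1 i := by
        simp only [tsum_indicator_one_eq_encard]
        exact_mod_cast encard_symmDiff_Iio_ncard_le hA hB
    _ = ∑' i, (Iio (u i) ∆ Iio (v i)).indicator 1 h := rfl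

theorem tsum_abs_sub_le [Countable ι] (hL : IsDecreasingRearrangement L u)
    (hM : IsDecreasingRearrangement M v)
    (hL0 : ∀ k, 0 ≤ L k) (hM0 : ∀ k, 0 ≤ M k) (hu0 : ∀ i, 0 ≤ u i) (hv0 : ∀ i, 0 ≤ v i) :
    ∑' k, ENNReal.ofReal |L k - M k| ≤ ∑' i, ENNReal.ofReal |u i - v i| := by
  have hmeas : ∀ a b : ℝ, Measurable ((Iio a ∆ Iio b).indicator (1 : ℝ → ℝ≥0∞)) := fun _ _ =>
    measurable_one.indicator (measurableSet_Iio.symmDiff measurableSet_Iio)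
  calc ∑' k, ENNReal.ofReal |L k - M k|
      = ∑' k, ∫⁻ h in Ioi 0, (Iio (L k) ∆ Iio (M k)).indicator 1 h :=
        tsum_congr fun k => ofReal_abs_sub_eq_setLIntegral_indicator (hL0 k) (hM0 k)
    _ = ∫⁻ h in Ioi 0, ∑' k, (Iio (L k) ∆ Iio (M k)).indicator 1 h :=
        (lintegral_tsum fun _ => (hmeas _ _).aemeasurable).symm
    _ ≤ ∫⁻ h in Ioi 0, ∑' i, (Iio (u i) ∆ Iio (v i)).indicator 1 h :=
        setLIntegral_mono (.tsum fun _ => hmeas _ _) fun _ hh =>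
          tsum_indicator_symmDiff_Iio_le hL hM hh
    _ = ∑' i, ∫⁻ h in Ioi 0, (Iio (u i) ∆ Iio (v i)).indicator 1 h :=
        lintegral_tsum fun _ => (hmeas _ _).aemeasurable
    _ = ∑' i, ENNReal.ofReal |u i - v i| :=
        tsum_congr fun i => (ofReal_abs_sub_eq_setLIntegral_indicator (hu0 i) (hv0 i)).symm

lemma comp_equiv (hL : IsDecreasingRearrangement L u) (e : κ ≃ ι) :
    IsDecreasingRearrangement L (u ∘ e) := by
  intro h hh
  obtain ⟨hfin, hcount⟩ := hL h hh
  have hpre : {j | h < (u ∘ e) j} = e ⁻¹' {i | h < u i} := rfl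
  rw [hpre, ncard_preimage_of_injective_subset_range e.injective (by simp)]
  exact ⟨hfin.preimage e.injective.injOn, hcount⟩

lemma sumElim_zero (hL : IsDecreasingRearrangement L u) :
    IsDecreasingRearrangement L (Sum.elim u (0 : κ → ℝ)) := by
  intro h hh
  obtain ⟨hfin, hcount⟩ := hL h hh
  have himage : {j | h < Sum.elim u (0 : κ → ℝ) j} = Sum.inl '' {i | h < u i} := by
    ext (i | j)
    · simp
    · simpa using hh.le
  rw [himage, ncard_image_of_injective _ Sum.inl_injective]
  exact ⟨hfin.image _, hcount⟩

end IsDecreasingRearrangement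

section kthLargest

variable {ι : Type*} (u : ι → ℝ)

def kthLargest (k : ℕ) : ℝ :=
  sSup {h : ℝ | 0 < h ∧ ∃ s : Finset ι, k ≤ s.card ∧ ∀ i ∈ s, h ≤ u i}

lemma kthLargest_nonneg (k : ℕ) : 0 ≤ kthLargest u k :=
  Real.sSup_nonneg fun _ hx => hx.1.le

variable {u}

lemma lt_kthLargest_iff {h : ℝ} (hh : 0 < h) (hfin : {i | h < u i}.Finite) (k : ℕ) :
    h < kthLargest u (k + 1) ↔ k < {i | h < u i}.ncard := by
  set S := {h : ℝ | 0 < h ∧ ∃ s : Finset ι, k + 1 ≤ s.card ∧ ∀ i ∈ s, h ≤ u i}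
  set F := hfin.toFinset
  have hFcard : F.card = {i | h < u i}.ncard := (ncard_eq_toFinset_card _ hfin).symm
  constructor
  · intro (hlt : h < sSup S)
    have hS : S.Nonempty := by
      by_contra hS
      rw [not_nonempty_iff_eq_empty] at hS
      rw [hS, Real.sSup_empty] at hlt
      exact hlt.not_gt hh
    obtain ⟨h', ⟨-, s, hcard, hs⟩, hh'⟩ := exists_lt_of_lt_csSup hS hlt
    calc k < s.card := hcard
      _ = (s : Set ι).ncard := (ncard_coe_finset s).symm
      _ ≤ _ := ncard_le_ncard (fun i hi => hh'.trans_le (hs i hi)) hfin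
  · intro hk
    have hF : F.Nonempty := Finset.card_pos.mp (by omega)
    have hmin : h < F.inf' hF u := (Finset.lt_inf'_iff hF).mpr fun i hi => hfin.mem_toFinset.mp hi
    have hmem : F.inf' hF u ∈ S :=
      ⟨hh.trans hmin, F, by omega, fun i hi => Finset.inf'_le u hi⟩
    have hbdd : BddAbove S := by
      refine ⟨max h (F.sup' hF u), fun h' ⟨_, s, hcard, hs⟩ => ?_⟩
      obtain ⟨i, hi⟩ := Finset.card_pos.mp (by omega : 0 < s.card)
      rcases le_or_gt (u i) h with hui | hui
      · exact (hs i hi).trans (hui.trans (le_max_left _ _))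
      · exact (hs i hi).trans ((Finset.le_sup' u (hfin.mem_toFinset.mpr hui)).trans
          (le_max_right _ _))
    exact hmin.trans_le (le_csSup hbdd hmem)

lemma isDecreasingRearrangement_kthLargest (hu : ∀ h > 0, {i | h < u i}.Finite) :
    IsDecreasingRearrangement (fun k => kthLargest u (k + 1)) u :=
  fun h hh => ⟨hu h hh, lt_kthLargest_iff hh (hu h hh)⟩

end kthLargest

lemma landC_eq_kthLargest (α : Diagram) (k : ℕ) (t : ℝ) :
    landC α k t = kthLargest (fun i => tentD (α i) t) k := rfl

lemma tentD_pad (α : Diagram) (t : ℝ) :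
    (fun j => tentD (pad α j) t) = Sum.elim (fun i => tentD (α i) t) 0 := by
  funext j
  cases j <;> rfl

lemma tsum_abs_sub_landC_le {α β : Diagram} {t : ℝ}
    (hα : ∀ h > 0, {i | h < tentD (α i) t}.Finite) (hβ : ∀ h > 0, {i | h < tentD (β i) t}.Finite)
    (e : (ℕ ⊕ ℕ) ≃ (ℕ ⊕ ℕ)) :
    ∑' k, ENNReal.ofReal |landC α (k + 1) t - landC β (k + 1) t| ≤
      ∑' j, ENNReal.ofReal |tentD (pad α j) t - tentD (pad β (e j)) t| := by
  have hrearr : ∀ γ : Diagram, (∀ h > 0, {i | h < tentD (γ i) t}.Finite) →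
      IsDecreasingRearrangement (fun k => landC γ (k + 1) t) (fun j => tentD (pad γ j) t) :=
    fun γ hγ => by
      simp only [landC_eq_kthLargest, tentD_pad]
      exact (isDecreasingRearrangement_kthLargest hγ).sumElim_zero
  exact (hrearr α hα).tsum_abs_sub_le ((hrearr β hβ).comp_equiv e)
    (fun _ => kthLargest_nonneg _ _) (fun _ => kthLargest_nonneg _ _)
    (fun _ => tentD_nonneg _ _) (fun _ => tentD_nonneg _ _)

lemma W1c_emptyDiagram (d : PtD → PtD → ℝ) (α : Diagram) :
    W1c d α emptyDiagram = ∑' j, ENNReal.ofReal (d (pad α j) none) := by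
  have hpad : ∀ j, pad emptyDiagram j = none := by rintro (_ | _) <;> rfl
  simp only [W1c, hpad, iInf_const]

lemma finite_setOf_lt_tentD {α : Diagram} (hα : W1c drkQ α emptyDiagram < ⊤) (t : ℝ) :
    ∀ h > 0, {i | h < tentD (α i) t}.Finite := by
  intro h hh
  have hsum : ∑' i, ENNReal.ofReal (drkQ (α i) none) ≠ ⊤ :=
    ne_top_of_le_ne_top (W1c_emptyDiagram drkQ α ▸ hα.ne)
      (ENNReal.tsum_comp_le_tsum_of_injective Sum.inl_injective _)
  refine (ENNReal.finite_const_le_of_tsum_ne_top hsum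
    (ENNReal.ofReal_pos.mpr (by positivity : 0 < 2 * h ^ 2)).ne').subset fun i hi => ?_
  have hlt : h < tentD (α i) t := hi
  have := two_mul_sq_tentD_le_drkQ_none (α i) t
  exact ENNReal.ofReal_le_ofReal (by nlinarith)

lemma tsum_lintegral_le_lintegral_tsum {X β : Type*} [MeasurableSpace X] [Countable β]
    (μ : Measure X) (f : β → X → ℝ≥0∞) :
    ∑' i, ∫⁻ x, f i x ∂μ ≤ ∫⁻ x, ∑' i, f i x ∂μ := by
  choose g hg_meas hg_le hg_eq using fun i => exists_measurable_le_lintegral_eq μ (f i)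
  calc ∑' i, ∫⁻ x, f i x ∂μ = ∑' i, ∫⁻ x, g i x ∂μ := tsum_congr hg_eq
    _ = ∫⁻ x, ∑' i, g i x ∂μ := (lintegral_tsum fun i => (hg_meas i).aemeasurable).symm
    _ ≤ ∫⁻ x, ∑' i, f i x ∂μ := lintegral_mono fun x => ENNReal.tsum_le_tsum fun i => hg_le i x

/-- Landscape stability for countable persistence diagrams that are 1-finite
with respect to `d_rk`: `‖Λα − Λβ‖₁ ≤ ½ W₁^rk(α, β)`. -/
theorem stmt16 (α β : Diagram)
    (hα : W1c drkQ α emptyDiagram < ⊤) (hβ : W1c drkQ β emptyDiagram < ⊤) :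
    lambdaDistC α β ≤ W1c drkQ α β / 2 := by
  rw [ENNReal.le_div_iff_mul_le (.inl two_ne_zero) (.inl ENNReal.ofNat_ne_top), W1c]
  refine le_iInf fun e => ?_
  calc lambdaDistC α β * 2
      ≤ (∫⁻ t, ∑' k, ENNReal.ofReal |landC α (k + 1) t - landC β (k + 1) t|) * 2 := by
        gcongr
        exact tsum_lintegral_le_lintegral_tsum _ _
    _ ≤ (∫⁻ t, ∑' j, ENNReal.ofReal |tentD (pad α j) t - tentD (pad β (e j)) t|) * 2 := by
        gcongr with t
        exact tsum_abs_sub_landC_le (finite_setOf_lt_tentD hα t) (finite_setOf_lt_tentD hβ t) e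
    _ = ∑' j, (∫⁻ t, ENNReal.ofReal |tentD (pad α j) t - tentD (pad β (e j)) t|) * 2 := by
        have hmeas : ∀ j, AEMeasurable fun t =>
            ENNReal.ofReal |tentD (pad α j) t - tentD (pad β (e j)) t| := fun j =>
          ((continuous_tentD _).sub (continuous_tentD _)).abs.measurable.ennreal_ofReal.aemeasurable
        rw [lintegral_tsum hmeas, ENNReal.tsum_mul_right]
    _ = ∑' j, ENNReal.ofReal (drkQ (pad α j) (pad β (e j))) :=
        tsum_congr fun j => lintegral_abs_sub_tentD_mul_two _ _

end
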